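/- Let $R$ be a commutative Noetherian local ring with maximal ideal $\mathfrak{m}$ whose residue field has characteristic $p > 0$ and such that $R/\mathfrak{m}^r$ is finite for all $r$. If $f$ is a ring automorphism of $R$ of finite order that induces the identity on $R/\mathfrak{m}^2$, then the order of $f$ is a power of $p$. -/
import Mathlib

open IsLocalRing

section Aux

variable {R : Type*} [CommRing R] [IsLocalRing R]

lemma aux_mem_max (g : R ≃+* R) {x : R} (hx : x ∈ maximalIdeal R) :
    g x ∈ maximalIdeal R := by
  rw [mem_maximalIdeal, mem_nonunits_iff] at hx ⊢
  intro h
  exact hx (by simpa using h.map g.symm.toRingHom)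

lemma aux_mem_pow (g : R ≃+* R) (r : ℕ) {x : R} (hx : x ∈ maximalIdeal R ^ r) :
    g x ∈ maximalIdeal R ^ r := by
  have h1 : Ideal.map (g : R →+* R) (maximalIdeal R ^ r) ≤ maximalIdeal R ^ r := by
    rw [Ideal.map_pow]
    refine Ideal.pow_right_mono ?_ r
    rw [Ideal.map_le_iff_le_comap]
    intro y hy
    exact aux_mem_max g hy
  exact h1 (Ideal.mem_map_of_mem _ hx)

lemma aux_step (g : R ≃+* R) (hg : ∀ x : R, g x - x ∈ maximalIdeal R ^ 2) :
    ∀ r : ℕ, ∀ x ∈ maximalIdeal R ^ r, g x - x ∈ maximalIdeal R ^ (r + 1) := by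
  intro r
  induction r with
  | zero =>
    intro x _
    exact Ideal.pow_le_pow_right (by norm_num) (hg x)
  | succ r ih =>
    intro x hx
    rw [pow_succ] at hx
    refine Submodule.mul_induction_on (C := fun y => g y - y ∈ maximalIdeal R ^ (r + 1 + 1))
      hx ?_ ?_
    · intro a ha b hb
      have hsplit : g (a * b) - a * b = (g a - a) * g b + a * (g b - b) := by
        rw [map_mul]; ring
      rw [hsplit]
      have h1 : (g a - a) * g b ∈ maximalIdeal R ^ (r + 1 + 1) := by
        rw [pow_succ]
        exact Ideal.mul_mem_mul (ih a ha) (aux_mem_max g hb)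
      have h2 : a * (g b - b) ∈ maximalIdeal R ^ (r + 1 + 1) := by
        have := Ideal.mul_mem_mul ha (hg b)
        rwa [← pow_add] at this
      exact add_mem h1 h2
    · intro y z hy hz
      have : g (y + z) - (y + z) = (g y - y) + (g z - z) := by
        rw [map_add]; ring
      rw [this]
      exact add_mem hy hz

lemma aux_pow_cong (g : R ≃+* R) (hg : ∀ x : R, g x - x ∈ maximalIdeal R ^ 2) (m : ℕ) :
    ∀ x : R, (g ^ m) x - x ∈ maximalIdeal R ^ 2 := by
  induction m with
  | zero =>
    intro x
    have h0 : ((g ^ 0 : R ≃+* R)) x = x := rfl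
    rw [h0, sub_self]
    exact zero_mem _
  | succ m ih =>
    intro x
    have happ : (g ^ (m + 1)) x = (g ^ m) (g x) := by
      rw [pow_succ]; rfl
    have : (g ^ (m + 1)) x - x = ((g ^ m) (g x) - (g ^ m) x) + ((g ^ m) x - x) := by
      rw [happ]; ring
    rw [this]
    refine add_mem ?_ (ih x)
    have : (g ^ m) (g x) - (g ^ m) x = (g ^ m) (g x - x) := by
      rw [map_sub]
    rw [this]
    exact aux_mem_pow (g ^ m) 2 (hg x)

lemma aux_rigid [IsNoetherianRing R] (g : R ≃+* R) (q : ℕ)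
    (hq : g ^ q = 1) (hu : IsUnit (q : R))
    (hg : ∀ x : R, g x - x ∈ maximalIdeal R ^ 2) (x : R) : g x = x := by
  have key : ∀ r : ℕ, ∀ x : R, g x - x ∈ maximalIdeal R ^ (r + 2) := by
    intro r
    induction r with
    | zero => simpa using hg
    | succ r ih =>
      intro x
      set δ := g x - x with hδ
      have hδmem : δ ∈ maximalIdeal R ^ (r + 2) := ih x
      have hiter : ∀ i : ℕ, (g ^ i) δ - δ ∈ maximalIdeal R ^ (r + 3) := by
        intro i
        induction i with
        | zero =>
          have h0 : ((g ^ 0 : R ≃+* R)) δ = δ := rfl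
          rw [h0, sub_self]
          exact zero_mem _
        | succ i ihi =>
          have h1 : (g ^ i) δ ∈ maximalIdeal R ^ (r + 2) := aux_mem_pow (g ^ i) _ hδmem
          have h2 : g ((g ^ i) δ) - (g ^ i) δ ∈ maximalIdeal R ^ (r + 3) :=
            aux_step g hg (r + 2) _ h1
          have happ : (g ^ (i + 1)) δ = g ((g ^ i) δ) := by
            rw [pow_succ']; rfl
          have heq : (g ^ (i + 1)) δ - δ =
              (g ((g ^ i) δ) - (g ^ i) δ) + ((g ^ i) δ - δ) := by
            rw [happ]; ring
          rw [heq]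
          exact add_mem h2 ihi
      have hsum : ∑ i ∈ Finset.range q, (g ^ i) δ = (g ^ q) x - x := by
        have hterm : ∀ i : ℕ, (g ^ (i + 1)) x - (g ^ i) x = (g ^ i) δ := by
          intro i
          have happ : (g ^ (i + 1)) x = (g ^ i) (g x) := by
            rw [pow_succ]; rfl
          rw [happ, hδ, map_sub]
        calc ∑ i ∈ Finset.range q, (g ^ i) δ
            = ∑ i ∈ Finset.range q, ((g ^ (i + 1)) x - (g ^ i) x) := by
              refine Finset.sum_congr rfl fun i _ => (hterm i).symm
          _ = (g ^ q) x - (g ^ 0) x := Finset.sum_range_sub (fun i => (g ^ i) x) q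
          _ = (g ^ q) x - x := rfl
      have hzero : ∑ i ∈ Finset.range q, (g ^ i) δ = 0 := by
        rw [hsum, hq]
        have h1 : ((1 : R ≃+* R)) x = x := rfl
        rw [h1, sub_self]
      have hqmem : (q : R) * δ ∈ maximalIdeal R ^ (r + 3) := by
        have hsplit : (q : R) * δ =
            (∑ i ∈ Finset.range q, (g ^ i) δ) -
              ∑ i ∈ Finset.range q, ((g ^ i) δ - δ) := by
          rw [← Finset.sum_sub_distrib]
          have hc : ∀ i ∈ Finset.range q, (g ^ i) δ - ((g ^ i) δ - δ) = δ :=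
            fun i _ => by ring
          rw [Finset.sum_congr rfl hc, Finset.sum_const, Finset.card_range, nsmul_eq_mul]
        rw [hsplit, hzero, zero_sub]
        exact neg_mem (Submodule.sum_mem _ fun i _ => hiter i)
      exact (Ideal.unit_mul_mem_iff_mem (maximalIdeal R ^ (r + 3)) hu).mp hqmem
  have hmem : ∀ r : ℕ, g x - x ∈ maximalIdeal R ^ r := by
    intro r
    exact Ideal.pow_le_pow_right (Nat.le_add_right r 2) (key r x)
  have hbot : (⨅ r : ℕ, maximalIdeal R ^ r) = ⊥ :=
    Ideal.iInf_pow_eq_bot_of_isLocalRing _ (Ideal.IsMaximal.ne_top inferInstance)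
  have : g x - x ∈ (⨅ r : ℕ, maximalIdeal R ^ r) := by
    rw [Submodule.mem_iInf]; exact hmem
  rw [hbot] at this
  exact sub_eq_zero.mp (Submodule.mem_bot R |>.mp this)

end Aux

theorem stmt_3 (R : Type*) [CommRing R] [IsLocalRing R] [IsNoetherianRing R]
    (p : ℕ) (hp : p.Prime) [CharP (IsLocalRing.ResidueField R) p]
    (hfin : ∀ r : ℕ, Finite (R ⧸ (IsLocalRing.maximalIdeal R) ^ r))
    (f : R ≃+* R) (hford : IsOfFinOrder f)
    (hf : ∀ x : R, f x - x ∈ (IsLocalRing.maximalIdeal R) ^ 2) :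
    ∃ k : ℕ, orderOf f = p ^ k := by
  have hn : 0 < orderOf f := hford.orderOf_pos
  refine ⟨(orderOf f).primeFactorsList.length, ?_⟩
  refine Nat.eq_prime_pow_of_unique_prime_dvd hn.ne' ?_
  intro q hq hdvd
  by_contra hne
  -- q is a unit in R
  have hpq : ¬ p ∣ q := by
    intro h
    exact hne ((Nat.prime_dvd_prime_iff_eq hp hq).mp h).symm
  have hqu : IsUnit (q : R) := by
    by_contra h
    have hmem : (q : R) ∈ maximalIdeal R := by
      rw [mem_maximalIdeal, mem_nonunits_iff]; exact h
    have : (residue R) (q : R) = 0 := (residue_eq_zero_iff _).mpr hmem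
    rw [map_natCast] at this
    exact hpq ((CharP.cast_eq_zero_iff (ResidueField R) p q).mp this)
  -- the automorphism g of order q
  set g : R ≃+* R := f ^ (orderOf f / q) with hgdef
  have hgord : orderOf g = q := by
    rw [hgdef]
    exact orderOf_pow_orderOf_div hn.ne' hdvd
  have hgq : g ^ q = 1 := by
    rw [← hgord]; exact pow_orderOf_eq_one g
  have hg2 : ∀ x : R, g x - x ∈ maximalIdeal R ^ 2 := aux_pow_cong f hf _
  have : g = 1 := by
    ext x
    exact aux_rigid g q hgq hqu hg2 x
  rw [this, orderOf_one] at hgord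
  exact hq.one_lt.ne hgord
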